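/- arXiv:2505.19661 — 2 statements merged into one kernel-verified Lean document; each statement's English description precedes it below -/
import Mathlib

section
/- If ω is an anti-involution on an associative unital superalgebra A, then the map ω̃ defined on the superalgebra of pseudo-differential operators A((z^{-1},∂_z^{-1})) by ω̃(a z^i ∂_z^j) = ω(a) z^j ∂_z^i (for a ∈ A and i,j ∈ ℤ) is an anti-involution: ω̃^2 = id and ω̃(PQ) = ω̃(Q)ω̃(P) for all pseudo-differential operators P, Q. -/
/-- The integer-valued generalized binomial coefficient `C(j,m) = j(j-1)⋯(j-m+1)/m!`. -/
def intBinom (j : ℤ) (m : ℕ) : ℤ :=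
  (∏ t ∈ Finset.range m, (j - t)) / (m.factorial : ℤ)

namespace PDO

variable {A : Type*} [Ring A]

/-- A pseudo-differential operator `∑ a_{ij} z^i ∂_z^j` is encoded by its coefficient
function `ℤ × ℤ → A`; membership in `A((z⁻¹, ∂_z⁻¹))` means the support is bounded above
in both variables. -/
def BoundedAbove (f : ℤ × ℤ → A) : Prop :=
  ∃ r s : ℤ, ∀ i j : ℤ, (r < i ∨ s < j) → f (i, j) = 0

/-- The product of pseudo-differential operators, determined by the rule
`∂_z^j z^k = ∑_{m≥0} C(j,m) C(k,m) m! z^{k-m} ∂_z^{j-m}` (for coefficient functions with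
support bounded above, each coefficient of the product is a finite sum). -/
noncomputable def mul (f g : ℤ × ℤ → A) : ℤ × ℤ → A := fun p =>
  ∑ᶠ (i : ℤ) (j : ℤ) (m : ℕ),
    (intBinom j m * intBinom (p.1 + m - i) m * (m.factorial : ℤ)) •
      (f (i, j) * g (p.1 + m - i, p.2 + m - j))

/-- The extension `ω̃` of an anti-involution `ω` of `A`, determined by
`ω̃(a z^i ∂_z^j) = ω(a) z^j ∂_z^i`. -/
def transpose (ω : A → A) (f : ℤ × ℤ → A) : ℤ × ℤ → A := fun p => ω (f (p.2, p.1))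

end PDO

/-! The normal-ordering coefficient `C(j,m) C(k,m) m!` of `∂^j z^k` is symmetric in `j` and
`k`, so swapping the exponents of `z` and `∂` and applying `ω` to the coefficients (which
reverses products in `A`) maps each term of the coefficient of `z^{p₂} ∂^{p₁}` in `PQ` to a
term of the coefficient of `z^{p₁} ∂^{p₂}` in `ω̃(Q) ω̃(P)`, bijectively; boundedness makes the
sums finite. -/

namespace PDO

variable {A : Type*}

theorem transpose_transpose {ω : A → A} (hω : Function.Involutive ω) (f : ℤ × ℤ → A) :
    transpose ω (transpose ω f) = f := by
  funext p
  exact hω _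

variable [Ring A]

theorem BoundedAbove.transpose {ω : A → A} (hω : ω 0 = 0) {f : ℤ × ℤ → A}
    (hf : BoundedAbove f) : BoundedAbove (transpose ω f) := by
  obtain ⟨r, s, hrs⟩ := hf
  refine ⟨s, r, fun i j hij => ?_⟩
  simp only [PDO.transpose, hrs j i hij.symm, hω]

def mulTerm (f g : ℤ × ℤ → A) (p : ℤ × ℤ) (x : ℤ × ℤ × ℕ) : A :=
  (intBinom x.2.1 x.2.2 * intBinom (p.1 + x.2.2 - x.1) x.2.2 * (x.2.2.factorial : ℤ)) •
    (f (x.1, x.2.1) * g (p.1 + x.2.2 - x.1, p.2 + x.2.2 - x.2.1))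

theorem finite_support_mulTerm {f g : ℤ × ℤ → A} (hf : BoundedAbove f) (hg : BoundedAbove g)
    (p : ℤ × ℤ) : (Function.support (mulTerm f g p)).Finite := by
  obtain ⟨rf, sf, hf⟩ := hf
  obtain ⟨rg, sg, hg⟩ := hg
  refine ((Set.finite_Icc (p.1 - rg) rf).prod ((Set.finite_Icc (p.2 - sg) sf).prod
    (Set.finite_Iic (rg + rf - p.1).toNat))).subset ?_
  rintro ⟨i, j, m⟩ hx
  have hfij : ¬(rf < i ∨ sf < j) := fun h => hx (by simp [mulTerm, hf i j h])
  have hgij : ¬(rg < p.1 + m - i ∨ sg < p.2 + m - j) := fun h => hx (by simp [mulTerm, hg _ _ h])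
  simp only [Set.mem_prod, Set.mem_Icc, Set.mem_Iic]
  omega

theorem mul_apply_eq_finsum {f g : ℤ × ℤ → A} (hf : BoundedAbove f) (hg : BoundedAbove g)
    (p : ℤ × ℤ) : mul f g p = ∑ᶠ x, mulTerm f g p x :=
  (finsum_curry₃ _ (finite_support_mulTerm hf hg p)).symm

def mulIndexTranspose (p : ℤ × ℤ) : ℤ × ℤ × ℕ ≃ ℤ × ℤ × ℕ where
  toFun x := (p.1 + x.2.2 - x.2.1, p.2 + x.2.2 - x.1, x.2.2)
  invFun y := (p.2 + y.2.2 - y.2.1, p.1 + y.2.2 - y.1, y.2.2)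
  left_inv := by rintro ⟨i, j, m⟩; simp
  right_inv := by rintro ⟨i, j, m⟩; simp

theorem map_mulTerm (ω : A →+ A) (hmul : ∀ a b : A, ω (a * b) = ω b * ω a)
    (f g : ℤ × ℤ → A) (p : ℤ × ℤ) (x : ℤ × ℤ × ℕ) :
    ω (mulTerm f g p.swap x) =
      mulTerm (transpose ω g) (transpose ω f) p (mulIndexTranspose p x) := by
  obtain ⟨i, j, m⟩ := x
  have hi : p.1 + (m : ℤ) - (p.1 + m - j) = j := by ring
  have hj : p.2 + (m : ℤ) - (p.2 + m - i) = i := by ring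
  simp only [mulTerm, mulIndexTranspose, Equiv.coe_fn_mk, transpose, Prod.fst_swap,
    Prod.snd_swap, map_zsmul, hmul, hi, hj]
  rw [mul_comm (intBinom (p.2 + m - i) m)]

theorem transpose_mul (ω : A →+ A) (hmul : ∀ a b : A, ω (a * b) = ω b * ω a)
    {f g : ℤ × ℤ → A} (hf : BoundedAbove f) (hg : BoundedAbove g) :
    transpose ω (mul f g) = mul (transpose ω g) (transpose ω f) := by
  funext p
  calc ω (mul f g p.swap)
      = ∑ᶠ x, ω (mulTerm f g p.swap x) := by
        rw [mul_apply_eq_finsum hf hg, ω.map_finsum (finite_support_mulTerm hf hg _)]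
    _ = ∑ᶠ x, mulTerm (transpose ω g) (transpose ω f) p (mulIndexTranspose p x) := by
        simp only [map_mulTerm ω hmul]
    _ = mul (transpose ω g) (transpose ω f) p := by
        rw [finsum_comp_equiv, mul_apply_eq_finsum (hg.transpose ω.map_zero)
          (hf.transpose ω.map_zero)]

end PDO

/-- If `ω` is an anti-involution of an associative unital (super)algebra `A`, then the map
`ω̃` on pseudo-differential operators `A((z⁻¹, ∂_z⁻¹))` defined by
`ω̃(a z^i ∂_z^j) = ω(a) z^j ∂_z^i` is an anti-involution: `ω̃² = id` and
`ω̃(PQ) = ω̃(Q) ω̃(P)`. -/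
theorem pdo_transpose_anti_involution (A : Type*) [Ring A] (ω : A → A)
    (hadd : ∀ a b : A, ω (a + b) = ω a + ω b)
    (hmul : ∀ a b : A, ω (a * b) = ω b * ω a)
    (hinv : ∀ a : A, ω (ω a) = a) :
    (∀ f : ℤ × ℤ → A, PDO.transpose ω (PDO.transpose ω f) = f) ∧
    (∀ f g : ℤ × ℤ → A, PDO.BoundedAbove f → PDO.BoundedAbove g →
      PDO.transpose ω (PDO.mul f g) =
        PDO.mul (PDO.transpose ω g) (PDO.transpose ω f)) :=
  ⟨PDO.transpose_transpose hinv,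
    fun _ _ => PDO.transpose_mul (AddMonoidHom.mk' ω hadd) hmul⟩
end

section
/- Let A be a finite-dimensional commutative associative unital ℂ-algebra with a nondegenerate symmetric bilinear form (·,·) satisfying (ab, c) = (a, bc) (i.e., A is Frobenius), acting faithfully and cyclically on a finite-dimensional space V. If moreover the action is diagonalizable, then A has a simple spectrum on V: the simultaneous eigenspaces are one-dimensional and V is their direct sum. -/
/-!
Commuting diagonalizable operators are simultaneously diagonalizable, so `V` is the direct sum of
the joint eigenspaces of `ρ(A)`, and the eigenvalue function of a nonzero joint eigenspace is a
character of `A`. Every character `χ` occurs: otherwise a product of factors `a - ψ(a)`, one for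
each occurring character `ψ`, acts by zero on `V` but not through `χ`, contradicting faithfulness.
Finally, write the cyclic vector as `v = v_χ + u` with `u` in the sum of the other joint
eigenspaces; that sum is `A`-stable, so any `ρ(a) v` lying in the `χ`-eigenspace equals
`χ(a) v_χ`, and each joint eigenspace is a line.
-/

open Module Polynomial

theorem AlgHom.exists_apply_ne_zero_forall_mem_apply_eq_zero {K A : Type*} [CommRing K]
    [IsDomain K] [CommRing A] [Algebra K A] {S : Finset (A →ₐ[K] K)} {φ : A →ₐ[K] K}
    (hφ : φ ∉ S) : ∃ b, φ b ≠ 0 ∧ ∀ ψ ∈ S, ψ b = 0 := by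
  have hsep : ∀ ψ ∈ S, ∃ a, φ a ≠ ψ a :=
    fun ψ hψ ↦ DFunLike.ne_iff.mp (ne_of_mem_of_not_mem hψ hφ).symm
  choose! a ha using hsep
  refine ⟨∏ ψ ∈ S, (a ψ - algebraMap K A (ψ (a ψ))), ?_, fun ψ hψ ↦ ?_⟩
  · simpa [map_prod, Finset.prod_eq_zero_iff, sub_eq_zero] using ha
  · exact map_prod ψ _ _ ▸ Finset.prod_eq_zero hψ (by simp)

namespace Module.End

variable {K V : Type*} [Field K] [AddCommGroup V] [Module K V]

theorem isSemisimple_of_iSup_eigenspace_eq_top [FiniteDimensional K V] {f : End K V}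
    (h : ⨆ μ, f.eigenspace μ = ⊤) : f.IsSemisimple := by
  classical
  set s := (finite_hasEigenvalue f).toFinset
  refine isSemisimple_of_squarefree_aeval_eq_zero (p := ∏ μ ∈ s, (X - C μ))
    (separable_prod_X_sub_C_iff'.mpr fun _ _ _ _ ↦ id).squarefree ?_
  rw [← LinearMap.ker_eq_top, eq_top_iff, ← h]
  refine iSup_le fun μ ↦ ?_
  by_cases hμ : f.HasEigenvalue μ
  · rw [← Finset.prod_erase_mul s _ ((finite_hasEigenvalue f).mem_toFinset.mpr hμ), map_mul,
      eigenspace_def, map_sub, aeval_X, aeval_C, Algebra.algebraMap_eq_smul_one]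
    exact LinearMap.ker_le_ker_comp _ _
  · rw [hasEigenvalue_iff, not_not] at hμ
    simp [hμ]

variable {A : Type*} [CommRing A] [Algebra K A] (ρ : A →ₐ[K] End K V)

def jointEigenspace (χ : A → K) : Submodule K V :=
  ⨅ a, (ρ a).eigenspace (χ a)

variable {ρ} in
theorem apply_eq_smul_of_mem_jointEigenspace {χ : A → K} {x : V}
    (hx : x ∈ jointEigenspace ρ χ) (a : A) : ρ a x = χ a • x :=
  mem_eigenspace_iff.mp (Submodule.mem_iInf _ |>.mp hx a)

theorem jointEigenspace_le_comap (a : A) (χ : A → K) :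
    jointEigenspace ρ χ ≤ (jointEigenspace ρ χ).comap (ρ a) := fun x hx ↦ by
  rw [Submodule.mem_comap, apply_eq_smul_of_mem_jointEigenspace hx]
  exact Submodule.smul_mem _ _ hx

theorem exists_algHom_coe_eq_of_jointEigenspace_ne_bot {χ : A → K}
    (hχ : jointEigenspace ρ χ ≠ ⊥) : ∃ φ : A →ₐ[K] K, ⇑φ = χ := by
  obtain ⟨x, hx, hx0⟩ := (Submodule.ne_bot_iff _).mp hχ
  have hinj (c d : K) (h : c • x = d • x) : c = d := smul_left_injective K hx0 h
  have heig := apply_eq_smul_of_mem_jointEigenspace hx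
  refine ⟨{ toFun := χ
            map_one' := hinj _ _ ?_
            map_mul' := fun a b ↦ hinj _ _ ?_
            map_zero' := hinj _ _ ?_
            map_add' := fun a b ↦ hinj _ _ ?_
            commutes' := fun r ↦ hinj _ _ ?_ }, rfl⟩
  · rw [← heig, map_one, one_apply, one_smul]
  · rw [← heig, map_mul, mul_apply, heig, map_smul, heig, smul_smul, mul_comm]
  · rw [← heig, map_zero, LinearMap.zero_apply, zero_smul]
  · rw [← heig, map_add, LinearMap.add_apply, heig, heig, add_smul]
  · rw [← heig, AlgHom.commutes, algebraMap_end_apply, Algebra.algebraMap_self_apply]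

theorem iSupIndep_jointEigenspace : iSupIndep (jointEigenspace ρ) :=
  (independent_iInf_maxGenEigenspace_of_forall_mapsTo (fun a ↦ ρ a)
    fun a b μ ↦ mapsTo_maxGenEigenspace_of_comm ((Commute.all b a).map ρ) μ).mono
    fun _ ↦ iInf_mono fun _ ↦ eigenspace_le_maxGenEigenspace

theorem iSupIndep_jointEigenspace_algHom :
    iSupIndep fun φ : A →ₐ[K] K ↦ jointEigenspace ρ φ :=
  (iSupIndep_jointEigenspace ρ).comp DFunLike.coe_injective

variable [FiniteDimensional K V]

theorem iSup_jointEigenspace_eq_top (hdiag : ∀ a, ⨆ μ, (ρ a).eigenspace μ = ⊤) :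
    ⨆ χ, jointEigenspace ρ χ = ⊤ := by
  have hmax a μ : (ρ a).maxGenEigenspace μ = (ρ a).eigenspace μ :=
    (isSemisimple_of_iSup_eigenspace_eq_top (hdiag a)).isFinitelySemisimple
      |>.maxGenEigenspace_eq_eigenspace μ
  have := iSup_iInf_maxGenEigenspace_eq_top_of_iSup_maxGenEigenspace_eq_top_of_commute
    (fun a ↦ ρ a) (fun a b _ ↦ (Commute.all a b).map ρ) fun a ↦ by simpa only [hmax] using hdiag a
  simp only [hmax] at this
  exact this

theorem finrank_jointEigenspace_le_one (hdiag : ∀ a, ⨆ μ, (ρ a).eigenspace μ = ⊤) {v : V}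
    (hv : ∀ w, ∃ a, ρ a v = w) (χ : A → K) : finrank K (jointEigenspace ρ χ) ≤ 1 := by
  set C := ⨆ (ψ) (_ : ψ ≠ χ), jointEigenspace ρ ψ
  have hC (a : A) : C ≤ C.comap (ρ a) := iSup₂_le fun ψ hψ ↦
    (jointEigenspace_le_comap ρ a ψ).trans <|
      Submodule.comap_mono (le_iSup₂ (f := fun ψ (_ : ψ ≠ χ) ↦ jointEigenspace ρ ψ) ψ hψ)
  have hv_mem : v ∈ jointEigenspace ρ χ ⊔ C := by
    rw [← iSup_split_single (jointEigenspace ρ) χ, iSup_jointEigenspace_eq_top ρ hdiag]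
    exact Submodule.mem_top
  obtain ⟨y, hy, u, hu, rfl⟩ := Submodule.mem_sup.mp hv_mem
  refine finrank_le_one ⟨y, hy⟩ fun ⟨w, hw⟩ ↦ ?_
  obtain ⟨a, rfl⟩ := hv w
  have hya := apply_eq_smul_of_mem_jointEigenspace hy a
  have hua : ρ a u = 0 := by
    refine Submodule.disjoint_def.mp (iSupIndep_jointEigenspace ρ χ) _ ?_ (hC a hu)
    simpa [hya] using sub_mem hw (Submodule.smul_mem _ (χ a) hy)
  exact ⟨χ a, Subtype.ext (by simp [hya, hua])⟩

theorem iSup_jointEigenspace_algHom_eq_top (hdiag : ∀ a, ⨆ μ, (ρ a).eigenspace μ = ⊤) :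
    ⨆ φ : A →ₐ[K] K, jointEigenspace ρ φ = ⊤ := by
  rw [eq_top_iff, ← iSup_jointEigenspace_eq_top ρ hdiag]
  refine iSup_le fun χ ↦ ?_
  rcases eq_or_ne (jointEigenspace ρ χ) ⊥ with h | h
  · simp [h]
  · obtain ⟨φ, rfl⟩ := exists_algHom_coe_eq_of_jointEigenspace_ne_bot ρ h
    exact le_iSup (fun φ : A →ₐ[K] K ↦ jointEigenspace ρ φ) φ

theorem isInternal_jointEigenspace_algHom [DecidableEq (A →ₐ[K] K)]
    (hdiag : ∀ a, ⨆ μ, (ρ a).eigenspace μ = ⊤) :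
    DirectSum.IsInternal fun φ : A →ₐ[K] K ↦ jointEigenspace ρ φ :=
  (DirectSum.isInternal_submodule_iff_iSupIndep_and_iSup_eq_top _).mpr
    ⟨iSupIndep_jointEigenspace_algHom ρ, iSup_jointEigenspace_algHom_eq_top ρ hdiag⟩

theorem eq_zero_of_forall_jointEigenspace_ne_bot (hdiag : ∀ a, ⨆ μ, (ρ a).eigenspace μ = ⊤)
    {b : A} (hb : ∀ φ : A →ₐ[K] K, jointEigenspace ρ φ ≠ ⊥ → φ b = 0) : ρ b = 0 := by
  rw [← LinearMap.ker_eq_top, eq_top_iff, ← iSup_jointEigenspace_algHom_eq_top ρ hdiag]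
  refine iSup_le fun φ ↦ ?_
  rcases eq_or_ne (jointEigenspace ρ φ) ⊥ with h | h
  · simp [h]
  · intro x hx
    rw [LinearMap.mem_ker, apply_eq_smul_of_mem_jointEigenspace hx, hb φ h, zero_smul]

theorem jointEigenspace_algHom_ne_bot (hfaith : Function.Injective ρ)
    (hdiag : ∀ a, ⨆ μ, (ρ a).eigenspace μ = ⊤) (φ : A →ₐ[K] K) : jointEigenspace ρ φ ≠ ⊥ := by
  intro hφ
  have hfin := Submodule.finite_ne_bot_of_iSupIndep (iSupIndep_jointEigenspace_algHom ρ)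
  obtain ⟨b, hφb, hb⟩ := AlgHom.exists_apply_ne_zero_forall_mem_apply_eq_zero
    (S := hfin.toFinset) (φ := φ) (by simpa using hφ)
  have hb0 : ρ b = 0 := eq_zero_of_forall_jointEigenspace_ne_bot ρ hdiag fun ψ hψ ↦
    hb ψ (hfin.mem_toFinset.mpr hψ)
  exact hφb (by rw [hfaith (hb0.trans (map_zero ρ).symm), map_zero])

end Module.End

theorem frobenius_simple_spectrum_general
    (A : Type*) [CommRing A] [Algebra ℂ A]
    [DecidableEq (A →ₐ[ℂ] ℂ)]
    (V : Type*) [AddCommGroup V] [Module ℂ V] [FiniteDimensional ℂ V]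
    (ρ : A →ₐ[ℂ] Module.End ℂ V) (hfaith : Function.Injective ρ)
    (hcyc : ∃ v : V, ∀ w : V, ∃ a : A, ρ a v = w)
    (hdiag : ∀ a : A, (⨆ μ : ℂ, Module.End.eigenspace (ρ a) μ) = ⊤) :
    (∀ χ : A →ₐ[ℂ] ℂ,
      Module.finrank ℂ (⨅ a : A, Module.End.eigenspace (ρ a) (χ a) : Submodule ℂ V) = 1) ∧
    DirectSum.IsInternal
      (fun χ : A →ₐ[ℂ] ℂ => (⨅ a : A, Module.End.eigenspace (ρ a) (χ a) : Submodule ℂ V)) := by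
  obtain ⟨v, hv⟩ := hcyc
  refine ⟨fun χ ↦ le_antisymm (End.finrank_jointEigenspace_le_one ρ hdiag hv χ) ?_,
    End.isInternal_jointEigenspace_algHom ρ hdiag⟩
  exact Submodule.one_le_finrank_iff.mpr (End.jointEigenspace_algHom_ne_bot ρ hfaith hdiag χ)

/-- Let `A` be a finite-dimensional commutative associative unital ℂ-algebra equipped with
a nondegenerate symmetric associative bilinear form (so `A` is Frobenius), acting
faithfully and cyclically (via `ρ`) on a finite-dimensional space `V`.  If moreover every
operator in the image of `A` is diagonalizable, then `A` has a simple spectrum on `V`: the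
simultaneous eigenspaces (indexed by characters `χ : A → ℂ`) are one-dimensional and `V`
is their (internal) direct sum. -/
theorem frobenius_simple_spectrum
    (A : Type*) [CommRing A] [Algebra ℂ A] [FiniteDimensional ℂ A]
    [DecidableEq (A →ₐ[ℂ] ℂ)]
    (B : LinearMap.BilinForm ℂ A)
    (hsymm : ∀ a b : A, B a b = B b a)
    (hnondeg : ∀ a : A, (∀ b : A, B a b = 0) → a = 0)
    (hassoc : ∀ a b c : A, B (a * b) c = B a (b * c))
    (V : Type*) [AddCommGroup V] [Module ℂ V] [FiniteDimensional ℂ V]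
    (ρ : A →ₐ[ℂ] Module.End ℂ V) (hfaith : Function.Injective ρ)
    (hcyc : ∃ v : V, ∀ w : V, ∃ a : A, ρ a v = w)
    (hdiag : ∀ a : A, (⨆ μ : ℂ, Module.End.eigenspace (ρ a) μ) = ⊤) :
    (∀ χ : A →ₐ[ℂ] ℂ,
      Module.finrank ℂ (⨅ a : A, Module.End.eigenspace (ρ a) (χ a) : Submodule ℂ V) = 1) ∧
    DirectSum.IsInternal
      (fun χ : A →ₐ[ℂ] ℂ => (⨅ a : A, Module.End.eigenspace (ρ a) (χ a) : Submodule ℂ V)) :=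
  frobenius_simple_spectrum_general A V ρ hfaith hcyc hdiag
end
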